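/- arXiv:1411.1833 — 2 statements merged into one kernel-verified Lean document; each statement's English description precedes it below -/
import Mathlib

section
/- Let $a_{ni} \in [0,1)$ for $i \ge 1, n \ge 1$ with $\sup_{n,i} a_{ni} < 1$. Suppose for each $i$, $a_i := \lim_{n\to\infty} a_{ni}$ exists, that $c_n := \sum_{i=1}^\infty a_{ni} < \infty$ for each $n$, that $c := \sum_{i=1}^\infty a_i < \infty$, and $\lim_{n\to\infty} c_n = c$. Then $\lim_{n\to\infty} \prod_{i=1}^\infty (1 - a_{ni}) = \prod_{i=1}^\infty (1 - a_i)$. -/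
/-!
Writing `∏' i, (1 - x i) = exp (∑' i, log (1 - x i))`, it suffices to show that the series of
logarithms converge. On `(-∞, b]` the map `x ↦ log (1 - x)` is `(1 - b)⁻¹`-Lipschitz, so this
follows from `∑' i, |a n i - l i| → 0`. That is Scheffé's lemma: `|x - y| = x + y - 2 min x y`,
and `∑' i, min (a n i) (l i) → ∑' i, l i` by dominated convergence, `l` being the dominating
sequence.
-/

open Filter Topology Set Real
open scoped NNReal

theorem Real.lipschitzOnWith_log_Ici {c : ℝ≥0} (hc : 0 < c) :
    LipschitzOnWith c⁻¹ log (Ici (c : ℝ)) := by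
  have hpos : ∀ x ∈ Ici (c : ℝ), 0 < x := fun x hx => lt_of_lt_of_le (by exact_mod_cast hc) hx
  refine (convex_Ici _).lipschitzOnWith_of_nnnorm_deriv_le
    (fun x hx => differentiableAt_log (hpos x hx).ne') fun x hx => ?_
  rw [deriv_log, ← NNReal.coe_le_coe, coe_nnnorm, norm_inv, NNReal.coe_inv,
    Real.norm_of_nonneg (hpos x hx).le]
  exact inv_anti₀ (by exact_mod_cast hc) hx

theorem Real.lipschitzOnWith_log_one_sub {b : ℝ} (hb : b < 1) :
    LipschitzOnWith (Real.toNNReal (1 - b))⁻¹ (fun x => log (1 - x)) (Iic b) := by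
  have := (Real.lipschitzOnWith_log_Ici (c := Real.toNNReal (1 - b)) (by simpa using hb)).comp
    (IsometryEquiv.subLeft (1 : ℝ)).isometry.lipschitz.lipschitzOnWith (s := Iic b)
    fun x (hx : x ≤ b) => by
      simp only [coe_toNNReal', IsometryEquiv.subLeft_apply, mem_Ici, sup_le_iff,
        tsub_le_iff_right, sub_nonneg]
      constructor <;> linarith
  rw [mul_one] at this
  exact this

theorem tendsto_tsum_abs_sub_of_tendsto_tsum {α ι : Type*} {𝓕 : Filter α} {f : α → ι → ℝ}
    {g : ι → ℝ} (hf₀ : ∀ n i, 0 ≤ f n i) (hg₀ : ∀ i, 0 ≤ g i) (hf : ∀ n, Summable (f n))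
    (hg : Summable g) (hlim : ∀ i, Tendsto (f · i) 𝓕 (𝓝 (g i)))
    (hsum : Tendsto (fun n => ∑' i, f n i) 𝓕 (𝓝 (∑' i, g i))) :
    Tendsto (fun n => ∑' i, |f n i - g i|) 𝓕 (𝓝 0) := by
  have hmin : Tendsto (fun n => ∑' i, min (f n i) (g i)) 𝓕 (𝓝 (∑' i, g i)) := by
    refine tendsto_tsum_of_dominated_convergence hg (fun i => ?_) (.of_forall fun n i => ?_)
    · simpa only [min_self] using (hlim i).min (tendsto_const_nhds (x := g i))
    · rw [Real.norm_of_nonneg (le_min (hf₀ n i) (hg₀ i))]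
      exact min_le_right _ _
  have hsummin (n : α) : Summable fun i => min (f n i) (g i) :=
    hg.of_nonneg_of_le (fun i => le_min (hf₀ n i) (hg₀ i)) fun i => min_le_right _ _
  have habs (n : α) : ∑' i, |f n i - g i|
      = ∑' i, f n i + ∑' i, g i - 2 * ∑' i, min (f n i) (g i) := by
    have (x y : ℝ) : |x - y| = x + y - 2 * min x y := by
      rw [← min_add_max x y, abs_sub_comm, ← max_sub_min_eq_abs]; ring
    simp_rw [this]
    rw [((hf n).add hg).tsum_sub ((hsummin n).mul_left 2), (hf n).tsum_add hg, tsum_mul_left]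
  simp_rw [habs]
  convert (hsum.add_const (∑' i, g i)).sub (hmin.const_mul 2) using 2
  ring

theorem tendsto_tsum_comp_of_tendsto_tsum_norm_sub {α ι E F : Type*}
    [SeminormedAddCommGroup E] [NormedAddCommGroup F] {𝓕 : Filter α} {φ : E → F}
    {s : Set E} {K : ℝ≥0} (hφ : LipschitzOnWith K φ s) {u : α → ι → E} {v : ι → E}
    (hus : ∀ n i, u n i ∈ s) (hvs : ∀ i, v i ∈ s)
    (hu : ∀ n, Summable fun i => ‖u n i - v i‖)
    (hφu : ∀ n, Summable fun i => φ (u n i)) (hφv : Summable fun i => φ (v i))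
    (h : Tendsto (fun n => ∑' i, ‖u n i - v i‖) 𝓕 (𝓝 0)) :
    Tendsto (fun n => ∑' i, φ (u n i)) 𝓕 (𝓝 (∑' i, φ (v i))) := by
  rw [tendsto_iff_norm_sub_tendsto_zero]
  refine squeeze_zero (fun n => norm_nonneg _) (fun n => ?_) (by simpa using h.const_mul (K : ℝ))
  have hle (i : ι) : ‖φ (u n i) - φ (v i)‖ ≤ K * ‖u n i - v i‖ :=
    hφ.norm_sub_le (hus n i) (hvs i)
  have hsum : Summable fun i => K * ‖u n i - v i‖ := (hu n).mul_left (K : ℝ)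
  calc ‖∑' i, φ (u n i) - ∑' i, φ (v i)‖ = ‖∑' i, (φ (u n i) - φ (v i))‖ := by
        rw [(hφu n).tsum_sub hφv]
    _ ≤ ∑' i, ‖φ (u n i) - φ (v i)‖ :=
        norm_tsum_le_tsum_norm (hsum.of_nonneg_of_le (fun _ => norm_nonneg _) hle)
    _ ≤ ∑' i, K * ‖u n i - v i‖ :=
        (hsum.of_nonneg_of_le (fun _ => norm_nonneg _) hle).tsum_le_tsum hle hsum
    _ = K * ∑' i, ‖u n i - v i‖ := tsum_mul_left

theorem Real.summable_log_one_sub_of_summable {ι : Type*} {u : ι → ℝ} (hu : Summable u) :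
    Summable fun i => log (1 - u i) := by
  simpa [sub_eq_add_neg] using Real.summable_log_one_add_of_summable hu.neg

theorem Real.tprod_one_sub_eq_exp_tsum_log {ι : Type*} {u : ι → ℝ} (hu1 : ∀ i, u i < 1)
    (hu : Summable u) : ∏' i, (1 - u i) = exp (∑' i, log (1 - u i)) :=
  (rexp_tsum_eq_tprod (fun i => sub_pos.2 (hu1 i)) (summable_log_one_sub_of_summable hu)).symm

theorem stmt_0 (a : ℕ → ℕ → ℝ) (l : ℕ → ℝ)
    (hmem : ∀ n i, a n i ∈ Set.Ico (0:ℝ) 1)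
    (hsup : ∃ b < (1:ℝ), ∀ n i, a n i ≤ b)
    (hlim : ∀ i, Tendsto (fun n => a n i) atTop (𝓝 (l i)))
    (hsummn : ∀ n, Summable (fun i => a n i))
    (hsuml : Summable l)
    (hc : Tendsto (fun n => ∑' i, a n i) atTop (𝓝 (∑' i, l i))) :
    Tendsto (fun n => ∏' i, (1 - a n i)) atTop (𝓝 (∏' i, (1 - l i))) := by
  obtain ⟨b, hb, hab⟩ := hsup
  have ha₀ (n i : ℕ) : 0 ≤ a n i := (hmem n i).1
  have hl₀ (i : ℕ) : 0 ≤ l i := ge_of_tendsto' (hlim i) (ha₀ · i)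
  have hlb (i : ℕ) : l i ≤ b := le_of_tendsto' (hlim i) (hab · i)
  have hlog : Tendsto (fun n => ∑' i, log (1 - a n i)) atTop (𝓝 (∑' i, log (1 - l i))) :=
    tendsto_tsum_comp_of_tendsto_tsum_norm_sub (lipschitzOnWith_log_one_sub hb) hab hlb
      (fun n => ((hsummn n).sub hsuml).norm)
      (fun n => summable_log_one_sub_of_summable (hsummn n))
      (summable_log_one_sub_of_summable hsuml)
      (tendsto_tsum_abs_sub_of_tendsto_tsum ha₀ hl₀ hsummn hsuml hlim hc)
  simp only [fun n => tprod_one_sub_eq_exp_tsum_log (fun i => (hab n i).trans_lt hb) (hsummn n),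
    tprod_one_sub_eq_exp_tsum_log (fun i => (hlb i).trans_lt hb) hsuml]
  exact (continuous_exp.tendsto _).comp hlog
end

section
/- Define $H_k(x) = e^{-x}\sum_{j=0}^{k-1} x^j/j!$ and $H(x) = \prod_{k=1}^\infty H_k(x^{-2})$ for $x > 0$. Then $1 - H(x) \sim x^{-2}$ as $x \to +\infty$, i.e., $\lim_{x\to\infty} x^2 (1 - H(x)) = 1$. -/
open Filter Topology

noncomputable def H (k : ℕ) (x : ℝ) : ℝ :=
  Real.exp (-x) * ∑ j ∈ Finset.range k, x ^ j / (Nat.factorial j : ℝ)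

/-!
Put `t = x⁻²`. The factor `H₁(t) = e^{-t}` already gives `1 - H(x) ≥ 1 - e^{-t} ≈ t`, while every
other factor `H_m(t)`, `m ≥ 2`, differs from `1` by `O(t^m)`; since all factors lie in `[0, 1]`,
the product is at least `1 - ∑ (1 - H_m(t)) = 1 - t + O(t²)`. Hence `1 - H(x) = t + O(t²)`.
-/

open Finset

theorem Finset.one_sub_sum_le_prod {ι R : Type*} [CommRing R] [LinearOrder R]
    [IsStrictOrderedRing R] (s : Finset ι) {f : ι → R} (h0 : ∀ i, 0 ≤ f i) (h1 : ∀ i, f i ≤ 1) :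
    1 - ∑ i ∈ s, (1 - f i) ≤ ∏ i ∈ s, f i := by
  classical
  induction s using Finset.induction_on with
  | empty => simp
  | insert a s ha ih =>
    rw [sum_insert ha, prod_insert ha]
    have hs : 0 ≤ ∑ i ∈ s, (1 - f i) := sum_nonneg fun i _ => sub_nonneg.2 (h1 i)
    nlinarith [h0 a, h1 a, mul_le_mul_of_nonneg_left ih (h0 a)]

namespace Real

variable {ι : Type*} {f : ι → ℝ}

theorem hasProd_iInf_prod_of_nonneg_of_le_one (h0 : ∀ i, 0 ≤ f i) (h1 : ∀ i, f i ≤ 1) :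
    HasProd f (⨅ s : Finset ι, ∏ i ∈ s, f i) :=
  tendsto_atTop_ciInf (prod_anti_set_of_le_one h0 h1)
    ⟨0, by rintro _ ⟨s, rfl⟩; exact prod_nonneg fun i _ => h0 i⟩

theorem tprod_le_prod_of_nonneg_of_le_one (h0 : ∀ i, 0 ≤ f i) (h1 : ∀ i, f i ≤ 1)
    (s : Finset ι) : ∏' i, f i ≤ ∏ i ∈ s, f i := by
  rw [(hasProd_iInf_prod_of_nonneg_of_le_one h0 h1).tprod_eq]
  exact ciInf_le ⟨0, by rintro _ ⟨s, rfl⟩; exact prod_nonneg fun i _ => h0 i⟩ s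

theorem one_sub_tsum_le_tprod (h0 : ∀ i, 0 ≤ f i) (h1 : ∀ i, f i ≤ 1)
    (hf : Summable fun i => 1 - f i) : 1 - ∑' i, (1 - f i) ≤ ∏' i, f i := by
  rw [(hasProd_iInf_prod_of_nonneg_of_le_one h0 h1).tprod_eq]
  refine le_ciInf fun s => (sub_le_sub_left ?_ 1).trans (s.one_sub_sum_le_prod h0 h1)
  exact hf.sum_le_tsum s fun i _ => sub_nonneg.2 (h1 i)

theorem exp_neg_le_one_sub_add_sq {t : ℝ} (ht : 0 ≤ t) : exp (-t) ≤ 1 - t + t ^ 2 := by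
  have hexp : exp (-t) * exp t = 1 := by rw [← exp_add, neg_add_cancel, exp_zero]
  nlinarith [one_sub_le_exp_neg t, add_one_le_exp t, exp_pos (-t)]

end Real

theorem H_one (t : ℝ) : H 1 t = Real.exp (-t) := by
  simp [H]

section H

variable {t : ℝ}

theorem H_nonneg (k : ℕ) (ht : 0 ≤ t) : 0 ≤ H k t :=
  mul_nonneg (Real.exp_pos _).le <| sum_nonneg fun j _ => by positivity

theorem one_sub_H_eq (k : ℕ) :
    1 - H k t = Real.exp (-t) * (Real.exp t - ∑ j ∈ range k, t ^ j / (j.factorial : ℝ)) := by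
  rw [H, mul_sub, ← Real.exp_add, neg_add_cancel, Real.exp_zero]

theorem H_le_one (k : ℕ) (ht : 0 ≤ t) : H k t ≤ 1 := by
  have := mul_nonneg (Real.exp_pos (-t)).le (sub_nonneg.2 (Real.sum_le_exp_of_nonneg ht k))
  linarith [one_sub_H_eq (t := t) k]

theorem one_sub_H_le {m : ℕ} (hm : 0 < m) (ht0 : 0 ≤ t) (ht1 : t ≤ 1) :
    1 - H m t ≤ 2 * t ^ m := by
  have hfac : (1 : ℝ) ≤ m.factorial := mod_cast m.factorial_pos
  have hm' : (1 : ℝ) ≤ m := mod_cast hm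
  have hcoef : t ^ m * (m + 1) / (m.factorial * m) ≤ 2 * t ^ m := by
    rw [div_le_iff₀ (by positivity)]
    nlinarith [pow_nonneg ht0 m, mul_le_mul_of_nonneg_right hfac (by positivity : (0:ℝ) ≤ m)]
  have hexp : Real.exp (-t) ≤ 1 := Real.exp_le_one_iff.2 (by linarith)
  have htail : 0 ≤ Real.exp t - ∑ j ∈ range m, t ^ j / (j.factorial : ℝ) :=
    sub_nonneg.2 (Real.sum_le_exp_of_nonneg ht0 m)
  rw [one_sub_H_eq]
  nlinarith [Real.exp_bound' ht0 ht1 hm]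

theorem summable_one_sub_H (ht0 : 0 ≤ t) (ht1 : t < 1) :
    Summable fun k : ℕ => 1 - H (k + 1) t :=
  .of_nonneg_of_le (fun k => sub_nonneg.2 (H_le_one _ ht0))
    (fun k => one_sub_H_le k.succ_pos ht0 ht1.le)
    (((summable_geometric_of_lt_one ht0 ht1).mul_left t).mul_left 2 |>.congr fun k => by ring)

theorem tsum_one_sub_H_le (ht0 : 0 ≤ t) (ht1 : t ≤ 1 / 2) :
    ∑' k : ℕ, (1 - H (k + 1) t) ≤ t + 4 * t ^ 2 := by
  have hgeo : Summable fun k : ℕ => 2 * t ^ 2 * t ^ k :=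
    (summable_geometric_of_lt_one ht0 (by linarith)).mul_left _
  have htail : ∑' k : ℕ, (1 - H (k + 2) t) ≤ 2 * t ^ 2 * (1 - t)⁻¹ := by
    rw [← tsum_geometric_of_lt_one ht0 (by linarith), ← tsum_mul_left]
    refine (summable_one_sub_H ht0 (by linarith)).comp_injective (add_left_injective 1)
      |>.tsum_le_tsum (fun k => ?_) hgeo
    have h := one_sub_H_le (m := k + 2) (by omega) ht0 (by linarith)
    rw [pow_add] at h
    linarith
  have hinv : (1 - t)⁻¹ ≤ 2 := by
    rw [inv_le_comm₀ (by linarith) two_pos]; linarith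
  rw [(summable_one_sub_H ht0 (by linarith)).tsum_eq_zero_add, zero_add, H_one]
  nlinarith [Real.one_sub_le_exp_neg t, sq_nonneg t]

theorem tprod_H_le_exp_neg (ht : 0 ≤ t) : ∏' k : ℕ, H (k + 1) t ≤ Real.exp (-t) := by
  simpa [H_one] using Real.tprod_le_prod_of_nonneg_of_le_one (fun k => H_nonneg (k + 1) ht)
    (fun k => H_le_one (k + 1) ht) {0}

theorem one_sub_tprod_H_mem_Icc (ht0 : 0 ≤ t) (ht1 : t ≤ 1 / 2) :
    1 - ∏' k : ℕ, H (k + 1) t ∈ Set.Icc (t - t ^ 2) (t + 4 * t ^ 2) := by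
  constructor
  · linarith [tprod_H_le_exp_neg ht0, Real.exp_neg_le_one_sub_add_sq ht0]
  · have hprod := Real.one_sub_tsum_le_tprod (fun k => H_nonneg (k + 1) ht0)
      (fun k => H_le_one (k + 1) ht0) (summable_one_sub_H ht0 (by linarith))
    linarith [tsum_one_sub_H_le ht0 ht1]

end H

theorem tendsto_one_sub_tprod_H_div :
    Tendsto (fun t => (1 - ∏' k : ℕ, H (k + 1) t) / t) (𝓝[>] 0) (𝓝 1) := by
  have hlin (c : ℝ) : Tendsto (fun t => 1 + c * t) (𝓝[>] 0) (𝓝 1) :=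
    ((Continuous.tendsto' (by fun_prop) 0 1 (by simp)).mono_left nhdsWithin_le_nhds)
  refine tendsto_of_tendsto_of_tendsto_of_le_of_le' (hlin (-1)) (hlin 4) ?_ ?_ <;>
  filter_upwards [Ioc_mem_nhdsGT (by norm_num : (0 : ℝ) < 1 / 2)] with t ⟨ht0, ht1⟩ <;>
  have h := one_sub_tprod_H_mem_Icc ht0.le ht1
  · rw [le_div_iff₀ ht0]; linarith [h.1]
  · rw [div_le_iff₀ ht0]; linarith [h.2]

theorem stmt_4 :
    Tendsto (fun x : ℝ => x ^ 2 * (1 - ∏' k : ℕ, H (k + 1) (x ^ 2)⁻¹)) atTop (𝓝 1) := by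
  have hinv : Tendsto (fun x : ℝ => (x ^ 2)⁻¹) atTop (𝓝[>] 0) :=
    tendsto_inv_atTop_nhdsGT_zero.comp (tendsto_pow_atTop two_ne_zero)
  refine (tendsto_one_sub_tprod_H_div.comp hinv).congr fun x => ?_
  simp [div_eq_mul_inv, mul_comm]
end
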